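/- arXiv:1005.2247 — 6 statements merged into one kernel-verified Lean document; each statement's English description precedes it below -/
import Mathlib

section
/- Let X be a real Banach space, A : X ⇉ X* a maximal monotone operator, and F_A its Fitzpatrick function, defined by F_A(x,x*) = sup_{(a,a*)∈gra A} (⟨x,a*⟩ + ⟨a,x*⟩ − ⟨a,a*⟩). Then for every (x,x*) ∈ X × X*, ⟨x,x*⟩ ≤ F_A(x,x*), with equality if and only if (x,x*) ∈ gra A. -/
open Set Filter Pointwise

noncomputable section

variable {X : Type*}

abbrev Dual' (X : Type*) [NormedAddCommGroup X] [NormedSpace ℝ X] := X →L[ℝ] ℝ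

section Defs
variable [NormedAddCommGroup X] [NormedSpace ℝ X]

/-- `A` is a monotone operator. -/
def MonotoneOp (A : X → Set (Dual' X)) : Prop :=
  ∀ x y (x' y' : Dual' X), x' ∈ A x → y' ∈ A y → 0 ≤ (x' - y') (x - y)

/-- `A` is maximal monotone: monotone, and every monotonically related pair is in the graph. -/
def MaxMonotone (A : X → Set (Dual' X)) : Prop :=
  MonotoneOp A ∧
    ∀ x (x' : Dual' X), (∀ y y', y' ∈ A y → 0 ≤ (x' - y') (x - y)) → x' ∈ A x

/-- domain of a set-valued operator -/
def domOp (A : X → Set (Dual' X)) : Set X := {x | (A x).Nonempty}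

/-- pointwise Minkowski sum of two set-valued operators -/
def opSum (A B : X → Set (Dual' X)) : X → Set (Dual' X) := fun x => A x + B x

/-- normal cone operator of a set `C` -/
def normalCone (C : Set X) : X → Set (Dual' X) :=
  fun x => {x' | x ∈ C ∧ ∀ c ∈ C, x' (c - x) ≤ 0}

/-- the Fitzpatrick function of `A` -/
def fitz (A : X → Set (Dual' X)) : X × Dual' X → EReal :=
  fun p => ⨆ q ∈ {q : X × Dual' X | q.2 ∈ A q.1},
    ((q.2 p.1 + p.2 q.1 - q.2 q.1 : ℝ) : EReal)

/-- `A` is maximal monotone of type (FPV) -/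
def FPV (A : X → Set (Dual' X)) : Prop :=
  MaxMonotone A ∧
    ∀ U : Set X, IsOpen U → Convex ℝ U → (U ∩ domOp A).Nonempty →
      ∀ x (x' : Dual' X), x ∈ U →
        (∀ y y', y' ∈ A y → y ∈ U → 0 ≤ (x' - y') (x - y)) → x' ∈ A x

/-- `A` is a linear relation: its graph is a linear subspace of `X × X*` -/
def LinearRel (A : X → Set (Dual' X)) : Prop :=
  (0 : Dual' X) ∈ A 0 ∧
  (∀ x y (x' y' : Dual' X), x' ∈ A x → y' ∈ A y → x' + y' ∈ A (x + y)) ∧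
  (∀ (c : ℝ) x (x' : Dual' X), x' ∈ A x → c • x' ∈ A (c • x))

/-- subdifferential of an extended-real-valued function -/
def subdiff (f : X → EReal) : X → Set (Dual' X) :=
  fun x => {x' | ∀ y, ((x' (y - x) : ℝ) : EReal) + f x ≤ f y}

/-- `f` is proper: never `⊥` and not identically `⊤` -/
def ProperFun (f : X → EReal) : Prop := (∀ x, f x ≠ ⊥) ∧ ∃ x, f x ≠ ⊤

/-- convexity for extended-real-valued functions -/
def EConvexOn (f : X → EReal) : Prop :=
  ∀ x y (t : ℝ), 0 ≤ t → t ≤ 1 →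
    f (t • x + (1 - t) • y) ≤ (t : EReal) * f x + ((1 - t : ℝ) : EReal) * f y

/-- effective domain of an extended-real-valued function -/
def domFun (f : X → EReal) : Set X := {x | f x ≠ ⊤}

end Defs

variable [NormedAddCommGroup X] [NormedSpace ℝ X] [CompleteSpace X]

theorem stmt1 (A : X → Set (Dual' X)) (hA : MaxMonotone A) :
    ∀ (x : X) (x' : Dual' X),
      ((x' x : ℝ) : EReal) ≤ fitz A (x, x') ∧
      (fitz A (x, x') = ((x' x : ℝ) : EReal) ↔ x' ∈ A x) := by
  intro x x'
  have hterm : ∀ (y : X) (y' : Dual' X), y' ∈ A y →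
      ((y' x + x' y - y' y : ℝ) : EReal) ≤ fitz A (x, x') := by
    intro y y' hy
    exact le_iSup₂ (f := fun (q : X × Dual' X) (_ : q.2 ∈ A q.1) =>
      ((q.2 x + x' q.1 - q.2 q.1 : ℝ) : EReal)) (y, y') hy
  have hle : ((x' x : ℝ) : EReal) ≤ fitz A (x, x') := by
    by_cases hx : x' ∈ A x
    · have := hterm x x' hx
      simpa using this
    · have h2 := mt (hA.2 x x') hx
      push_neg at h2
      obtain ⟨y, y', hy, hlt⟩ := h2
      have key : x' x < y' x + x' y - y' y := by
        have : (x' - y') (x - y) = x' x - x' y - y' x + y' y := by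
          simp [map_sub]; ring
        rw [this] at hlt; linarith
      exact le_trans (EReal.coe_le_coe_iff.mpr key.le) (hterm y y' hy)
  refine ⟨hle, ?_, ?_⟩
  · intro heq
    refine hA.2 x x' ?_
    intro y y' hy
    have h1 := hterm y y' hy
    rw [heq, EReal.coe_le_coe_iff] at h1
    have : (x' - y') (x - y) = x' x - x' y - y' x + y' y := by
      simp [map_sub]; ring
    rw [this]; linarith
  · intro hx
    refine le_antisymm ?_ hle
    refine iSup₂_le ?_
    rintro ⟨y, y'⟩ hy
    have hmono := hA.1 x y x' y' hx hy
    have : (x' - y') (x - y) = x' x - x' y - y' x + y' y := by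
      simp [map_sub]; ring
    rw [this] at hmono
    exact EReal.coe_le_coe_iff.mpr (by dsimp; linarith)
end
end

section
/- Let X be a real Banach space and A : X ⇉ X* a monotone operator with int dom A ≠ ∅. Then A is locally bounded at every x ∈ int dom A: there exist δ > 0 and K > 0 such that ‖y*‖ ≤ K for every y ∈ (x + δ𝔹_X) ∩ dom A and every y* ∈ Ay. -/
open Set Filter Pointwise

noncomputable section

variable {X : Type*}

variable [NormedAddCommGroup X] [NormedSpace ℝ X] [CompleteSpace X]

theorem stmt2 (A : X → Set (Dual' X)) (hA : MonotoneOp A)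
    (hint : (interior (domOp A)).Nonempty) :
    ∀ x ∈ interior (domOp A), ∃ δ > (0:ℝ), ∃ K > (0:ℝ),
      ∀ y ∈ Metric.ball x δ ∩ domOp A, ∀ y' ∈ A y, ‖y'‖ ≤ K := by
  intro x hx
  obtain ⟨r, hr, hrball⟩ := Metric.isOpen_iff.mp isOpen_interior x hx
  have hrdom : Metric.ball x r ⊆ domOp A := hrball.trans interior_subset
  set S : ℕ → Set X := fun n =>
    {z | ∀ y ∈ domOp A ∩ Metric.ball x r, ∀ y' ∈ A y, y' (z - y) ≤ (n : ℝ)} with hSdef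
  have hSclosed : ∀ n, IsClosed (S n) := by
    intro n
    have hrw : S n = ⋂ y ∈ domOp A ∩ Metric.ball x r, ⋂ y' ∈ A y, {z | y' (z - y) ≤ (n:ℝ)} := by
      ext z; simp [hSdef]
    rw [hrw]
    refine isClosed_biInter fun y hy => isClosed_biInter fun y' hy' => ?_
    exact isClosed_le (y'.continuous.comp (continuous_id.sub continuous_const)) continuous_const
  set F : ℕ → Set X := fun n => S n ∪ (Metric.ball x r)ᶜ with hFdef
  have hFclosed : ∀ n, IsClosed (F n) :=
    fun n => (hSclosed n).union Metric.isOpen_ball.isClosed_compl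
  have hFcover : ⋃ n, F n = univ := by
    ext z
    simp only [mem_iUnion, mem_univ, iff_true]
    by_cases hz : z ∈ Metric.ball x r
    · obtain ⟨z', hz'⟩ := hrdom hz
      refine ⟨⌈‖z'‖ * (2*r)⌉₊, Set.mem_union_left _ ?_⟩
      intro y hy y' hy'
      have hm := hA z y z' y' hz' hy'
      simp only [ContinuousLinearMap.sub_apply] at hm
      have h2 : z' (z - y) ≤ ‖z'‖ * ‖z - y‖ :=
        (le_abs_self _).trans (by simpa using z'.le_opNorm (z - y))
      have h3 : ‖z - y‖ ≤ 2 * r := by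
        have t := dist_triangle z x y
        have hzx : dist z x < r := Metric.mem_ball.mp hz
        have hxy : dist x y < r := by rw [dist_comm]; exact Metric.mem_ball.mp hy.2
        rw [← dist_eq_norm]; linarith
      have h4 : ‖z'‖ * ‖z - y‖ ≤ ‖z'‖ * (2*r) :=
        mul_le_mul_of_nonneg_left h3 (norm_nonneg z')
      have h5 := Nat.le_ceil (‖z'‖ * (2*r))
      show y' (z - y) ≤ _
      linarith
    · exact ⟨0, Set.mem_union_right _ hz⟩
  have hdense := dense_iUnion_interior_of_closed hFclosed hFcover
  obtain ⟨z₀', hz₀'s, hz₀'b⟩ :=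
    hdense.exists_mem_open Metric.isOpen_ball ⟨x, Metric.mem_ball_self hr⟩
  obtain ⟨n, hz₀'n⟩ := mem_iUnion.mp hz₀'s
  have hVopen : IsOpen (interior (F n) ∩ Metric.ball x r) :=
    isOpen_interior.inter Metric.isOpen_ball
  obtain ⟨ε, hε, hball⟩ := Metric.isOpen_iff.mp hVopen z₀' ⟨hz₀'n, hz₀'b⟩
  set z₀ := z₀' with hz₀def
  have hVS : Metric.ball z₀ ε ⊆ S n := by
    intro z hz
    rcases interior_subset (hball hz).1 with h | h
    · exact h
    · exact absurd (hball hz).2 h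
  have hz₀r : z₀ ∈ Metric.ball x r := (hball (Metric.mem_ball_self hε)).2
  set z₂ := x + (x - z₀) with hz₂def
  have hz₂r : z₂ ∈ Metric.ball x r := by
    rw [Metric.mem_ball, dist_eq_norm]
    have e : z₂ - x = -(z₀ - x) := by rw [hz₂def]; abel
    rw [e, norm_neg, ← dist_eq_norm]
    exact Metric.mem_ball.mp hz₀r
  obtain ⟨w', hw'⟩ := hrdom hz₂r
  set C : ℝ := ((n:ℝ) + ‖w'‖ * (2*r)) / 2 with hCdef
  have hC0 : 0 ≤ C := by rw [hCdef]; positivity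
  have hK0 : (0:ℝ) < 8*C/ε + 1 := by
    have := div_nonneg (by linarith : (0:ℝ) ≤ 8*C) hε.le
    linarith
  refine ⟨min (ε/8) r, lt_min (by linarith) hr, 8*C/ε + 1, hK0, ?_⟩
  intro y hy y' hy'
  obtain ⟨hyδ, hydom⟩ := hy
  have hyδ' := Metric.mem_ball.mp hyδ
  have hyr : y ∈ Metric.ball x r :=
    Metric.mem_ball.mpr (lt_of_lt_of_le hyδ' (min_le_right _ _))
  have hyx : ‖y - x‖ ≤ ε/8 := by
    rw [← dist_eq_norm]
    exact le_of_lt (lt_of_lt_of_le hyδ' (min_le_left _ _))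
  have key : ∀ v : X, ‖v‖ ≤ ε/4 → y' v ≤ C + ‖y'‖ * (ε/8) := by
    intro v hv
    have h1 : y' (z₀ + (2:ℝ)•v - y) ≤ (n:ℝ) := by
      refine hVS ?_ y ⟨hydom, hyr⟩ y' hy'
      rw [Metric.mem_ball, dist_eq_norm]
      have e : z₀ + (2:ℝ)•v - z₀ = (2:ℝ)•v := by abel
      rw [e, norm_smul, Real.norm_eq_abs]
      rw [abs_of_pos (by norm_num : (0:ℝ) < 2)]
      linarith
    have hmono := hA y z₂ y' w' hy' hw'
    simp only [ContinuousLinearMap.sub_apply] at hmono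
    have h2 : y' (z₂ - y) ≤ ‖w'‖ * (2*r) := by
      have e1 : y' (z₂ - y) = - y' (y - z₂) := by rw [← map_neg]; congr 1; abel
      have e2 : w' (z₂ - y) = - w' (y - z₂) := by rw [← map_neg]; congr 1; abel
      have h2b : w' (z₂ - y) ≤ ‖w'‖ * ‖z₂ - y‖ :=
        (le_abs_self _).trans (by simpa using w'.le_opNorm (z₂ - y))
      have h2c : ‖z₂ - y‖ ≤ 2*r := by
        have t := dist_triangle z₂ x y
        have h := Metric.mem_ball.mp hz₂r
        have hxy : dist x y < r := by rw [dist_comm]; exact Metric.mem_ball.mp hyr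
        rw [← dist_eq_norm]; linarith
      have h2d : ‖w'‖ * ‖z₂ - y‖ ≤ ‖w'‖ * (2*r) :=
        mul_le_mul_of_nonneg_left h2c (norm_nonneg w')
      linarith
    have hsum : y' (z₀ + (2:ℝ)•v - y) + y' (z₂ - y) = 2 * y' (x + v - y) := by
      rw [← map_add]
      have e : (z₀ + (2:ℝ)•v - y) + (z₂ - y) = (2:ℝ) • (x + v - y) := by
        rw [hz₂def]; module
      rw [e, map_smul, smul_eq_mul]
    have h3 : y' (x + v - y) ≤ C := by rw [hCdef]; linarith
    have h4 : y' v = y' (x + v - y) + y' (y - x) := by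
      rw [← map_add]; congr 1; abel
    have h5 : y' (y - x) ≤ ‖y'‖ * (ε/8) := by
      have h5a : y' (y - x) ≤ ‖y'‖ * ‖y - x‖ :=
        (le_abs_self _).trans (by simpa using y'.le_opNorm (y - x))
      have := mul_le_mul_of_nonneg_left hyx (norm_nonneg y')
      linarith
    linarith
  have hbound : ‖y'‖ ≤ 4*C/ε + ‖y'‖/2 := by
    apply ContinuousLinearMap.opNorm_le_bound
    · have h := norm_nonneg y'
      have := div_nonneg (by linarith : (0:ℝ) ≤ 4*C) hε.le
      linarith
    intro u
    by_cases hu : u = 0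
    · simp [hu]
    have hu0 : 0 < ‖u‖ := norm_pos_iff.mpr hu
    have hgen : ∀ w : X, ‖w‖ = ‖u‖ → y' w ≤ (4*C/ε + ‖y'‖/2) * ‖u‖ := by
      intro w hw
      have hε4 : (0:ℝ) < ε/(4*‖u‖) := by positivity
      have hv : ‖(ε/(4*‖u‖)) • w‖ ≤ ε/4 := by
        rw [norm_smul, Real.norm_eq_abs, abs_of_pos hε4, hw]
        rw [div_mul_eq_mul_div, div_le_iff₀ (by positivity)]
        ring_nf
        nlinarith
      have hk := key _ hv
      rw [map_smul, smul_eq_mul] at hk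
      have h' : y' w ≤ (C + ‖y'‖ * (ε/8)) / (ε/(4*‖u‖)) := (le_div_iff₀' hε4).mpr hk
      have e : (C + ‖y'‖ * (ε/8)) / (ε/(4*‖u‖)) = (4*C/ε + ‖y'‖/2) * ‖u‖ := by
        field_simp
        ring
      linarith [e ▸ h']
    rw [Real.norm_eq_abs, abs_le]
    constructor
    · have := hgen (-u) (by rw [norm_neg])
      rw [map_neg] at this
      linarith
    · exact hgen u rfl
  have : ‖y'‖ ≤ 8*C/ε := by
    have e : (8:ℝ)*C/ε = 2 * (4*C/ε) := by ring
    rw [e]; linarith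
  linarith
end
end

section
/- Let X be a real Banach space, let A : X ⇉ X* be a maximal monotone linear relation, and let C be a nonempty closed convex subset of X with dom A ∩ int C ≠ ∅. Then A + N_C is of type (FPV). -/
open Set Filter Pointwise

noncomputable section

variable {X : Type*}

/-!
For a graph point `(z, z')` call `(x' - z') (x - z)` its gap against `(x, x')`. Since `gra A` is a
subspace on which `A` is monotone, the gap is concave along segments of `gra A`, so its epigraph
`gapEpigraph A x x'` is convex. Separating `(x, 0)` from it in `X × ℝ` and invoking maximality of
`A` shows that `(x, 0)` lies in its closure as soon as `x ∈ closure (domOp A)`.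

Let `(x, x')` be monotonically related to `gra (A + N_C)` over an open convex `U`. Moving along the
lines `u' + K • f ∈ A u`, for `f` annihilating `domOp A` (hence `f ∈ A 0`), gives
`x ∈ closure (domOp A)`. Scaling normal vectors gives `g (x - z) ≤ 0` for every normal `g` of `C`
at points `z ∈ domOp A ∩ U`; this forces `x ∈ C`, since otherwise a boundary point of `C` on a
segment from `domOp A ∩ interior C` towards `x` carries a normal pointing at `x`. Finally,
separating `interior (C ∩ U) ×ˢ Iio 0` from the gap epigraph produces `ν` normal to `C ∩ U` at `x`,
hence normal to `C`, with `x' - ν ∈ A x`.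
-/

open Topology

lemma nonpos_of_forall_mul_le {a b c : ℝ} (h : ∀ K, a ≤ K → K * b ≤ c) : b ≤ 0 := by
  by_contra! hb
  have hK := h (max a ((c + 1) / b)) (le_max_left _ _)
  have hmax : (c + 1) / b * b ≤ max a ((c + 1) / b) * b :=
    mul_le_mul_of_nonneg_right (le_max_right _ _) hb.le
  rw [div_mul_cancel₀ _ hb.ne'] at hmax
  linarith

lemma eq_zero_of_forall_mul_le {b c : ℝ} (h : ∀ K, K * b ≤ c) : b = 0 :=
  le_antisymm (nonpos_of_forall_mul_le (a := 0) fun K _ => h K)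
    (neg_nonpos.1 <| nonpos_of_forall_mul_le (a := 0) fun K _ => by simpa using h (-K))

section Convex
variable [NormedAddCommGroup X] [NormedSpace ℝ X]

lemma exists_eq_apply_fst_add_mul_snd (F : StrongDual ℝ (X × ℝ)) :
    ∃ (n : Dual' X) (β : ℝ), ∀ p : X × ℝ, F p = n p.1 + p.2 * β := by
  refine ⟨F.comp (.inl ℝ X ℝ), F (0, 1), fun p => ?_⟩
  rw [← F.comp_inl_add_comp_inr p]
  simp only [ContinuousLinearMap.comp_apply, ContinuousLinearMap.inl_apply,
    ContinuousLinearMap.inr_apply]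
  rw [show ((0 : X), p.2) = p.2 • ((0 : X), (1 : ℝ)) by simp, map_smul, smul_eq_mul]

lemma eventually_add_smul_mem {U : Set X} (hU : IsOpen U) {x : X} (hx : x ∈ U) (v : X) :
    ∀ᶠ t in 𝓝[>] (0 : ℝ), t ∈ Ioc 0 1 ∧ x + t • v ∈ U := by
  have hcont : Continuous fun t : ℝ => x + t • v := by fun_prop
  refine Filter.Eventually.and (Ioc_mem_nhdsGT one_pos) (nhdsWithin_le_nhds ?_)
  exact hcont.continuousAt.preimage_mem_nhds (by simpa using hU.mem_nhds hx)

lemma exists_mem_inter_interior_inter {M C U : Set X} (hM : Convex ℝ M) (hC : Convex ℝ C)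
    (hU : IsOpen U) {a u : X} (ha : a ∈ M ∩ interior C) (hu : u ∈ M ∩ C ∩ U) :
    (M ∩ interior C ∩ U).Nonempty := by
  obtain ⟨t, ht, htU⟩ := (eventually_add_smul_mem hU hu.2 (a - u)).exists
  exact ⟨_, ⟨hM.add_smul_sub_mem hu.1.1 ha.1 (Ioc_subset_Icc_self ht),
    hC.add_smul_sub_mem_interior hu.1.2 ha.2 ht⟩, htU⟩

lemma exists_mem_segment_mem_diff_interior {C : Set X} (hC : IsClosed C) {a w : X}
    (ha : a ∈ interior C) (hw : w ∉ C) : ∃ z ∈ segment ℝ a w, z ∈ C ∧ z ∉ interior C := by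
  by_contra! h
  have hcover : segment ℝ a w ⊆ interior C ∪ Cᶜ := fun z hz =>
    (em (z ∈ C)).imp (h z hz) id
  obtain ⟨z, -, hzi, hzc⟩ := (convex_segment a w).isPreconnected _ _ isOpen_interior
    hC.isOpen_compl hcover ⟨a, left_mem_segment ℝ a w, ha⟩ ⟨w, right_mem_segment ℝ a w, hw⟩
  exact hzc (interior_subset hzi)

end Convex

section NormalCone
variable [NormedAddCommGroup X] [NormedSpace ℝ X] {C : Set X}

lemma zero_mem_normalCone {z : X} (hz : z ∈ C) : (0 : Dual' X) ∈ normalCone C z :=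
  ⟨hz, fun _ _ => le_rfl⟩

lemma smul_mem_normalCone {z : X} {g : Dual' X} (hg : g ∈ normalCone C z) {K : ℝ}
    (hK : 0 ≤ K) : K • g ∈ normalCone C z :=
  ⟨hg.1, fun c hc => mul_nonpos_of_nonneg_of_nonpos hK (hg.2 c hc)⟩

lemma monotoneOp_normalCone (C : Set X) : MonotoneOp (normalCone C) := by
  intro x y x' y' hx' hy'
  have h₁ := hx'.2 y hy'.1
  have h₂ := hy'.2 x hx'.1
  rw [← neg_sub, map_neg, neg_nonpos] at h₁
  rw [sub_apply]
  linarith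

lemma MonotoneOp.opSum {A B : X → Set (Dual' X)} (hA : MonotoneOp A) (hB : MonotoneOp B) :
    MonotoneOp (opSum A B) := by
  rintro x y _ _ ⟨a, ha, b, hb, rfl⟩ ⟨a', ha', b', hb', rfl⟩
  have := add_nonneg (hA x y a a' ha ha') (hB x y b b' hb hb')
  simpa only [add_sub_add_comm, add_apply] using this

lemma mem_normalCone_of_interior (hC : Convex ℝ C) (hCi : (interior C).Nonempty) {z : X}
    (hz : z ∈ C) {g : Dual' X} (hg : ∀ c ∈ interior C, g c ≤ g z) : g ∈ normalCone C z := by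
  refine ⟨hz, fun c hc => ?_⟩
  have hc' : c ∈ closure (interior C) := by
    rw [hC.closure_interior_eq_closure_of_nonempty_interior hCi]
    exact subset_closure hc
  rw [map_sub, sub_nonpos]
  exact closure_minimal hg (isClosed_le g.continuous continuous_const) hc'

lemma mem_normalCone_of_mem_normalCone_inter (hC : Convex ℝ C) {U : Set X} (hU : IsOpen U)
    {x : X} (hxU : x ∈ U) {ν : Dual' X} (hν : ν ∈ normalCone (C ∩ U) x) :
    ν ∈ normalCone C x := by
  refine ⟨hν.1.1, fun c hc => ?_⟩
  obtain ⟨t, ht, htU⟩ := (eventually_add_smul_mem hU hxU (c - x)).exists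
  have h := hν.2 _ ⟨hC.add_smul_sub_mem hν.1.1 hc (Ioc_subset_Icc_self ht), htU⟩
  rw [add_sub_cancel_left, map_smul, smul_eq_mul] at h
  exact nonpos_of_mul_nonpos_right h ht.1

lemma apply_sub_pos_of_sub_smul_mem {s : Set X} {g : Dual' X} {x z : X}
    (hg : ∀ c ∈ s, g c < g z) {t : ℝ} (ht : 0 ≤ t) (hp : z - t • (x - z) ∈ s) :
    0 < g (x - z) := by
  have h := hg _ hp
  rw [map_sub, map_smul, smul_eq_mul, sub_lt_self_iff] at h
  exact pos_of_mul_pos_right h ht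

lemma eventually_exists_normalCone_apply_pos (hCcl : IsClosed C) (hC : Convex ℝ C) {a x : X}
    (ha : a ∈ interior C) (hx : x ∉ C) :
    ∀ᶠ w in 𝓝 x, ∃ z ∈ segment ℝ a w, ∃ g ∈ normalCone C z, 0 < g (x - z) := by
  obtain ⟨ρ, hρ, hball⟩ := Metric.isOpen_iff.1 isOpen_interior a ha
  obtain ⟨r, hr, hrC⟩ := Metric.isOpen_iff.1 hCcl.isOpen_compl x hx
  -- `δ` keeps the weight `α` of `a` in the boundary point `z = α • a + β • w` above `δ / ρ`,
  -- so that `z - (β / α) • (x - z) = a - (β / α) • (x - w)` lies in `ball a ρ`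
  obtain ⟨δ, hδ, hδρ, hδr⟩ : ∃ δ : ℝ, 0 < δ ∧ δ * (‖x - a‖ + δ) < ρ * (r - δ) ∧ δ < r := by
    have h₁ : ∀ᶠ δ in 𝓝 (0 : ℝ), δ * (‖x - a‖ + δ) < ρ * (r - δ) :=
      ContinuousAt.eventually_lt (by fun_prop) (by fun_prop) (by simp; positivity)
    exact (Filter.Eventually.and (self_mem_nhdsWithin (s := Ioi 0))
      (nhdsWithin_le_nhds (h₁.and (eventually_lt_nhds hr)))).exists
  filter_upwards [Metric.ball_mem_nhds x hδ] with w hw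
  rw [Metric.mem_ball, dist_comm, dist_eq_norm] at hw
  have hwC : w ∉ C := fun h => hrC (by rw [Metric.mem_ball, dist_comm, dist_eq_norm]; linarith) h
  obtain ⟨z, hz, hzC, hzi⟩ := exists_mem_segment_mem_diff_interior hCcl ha hwC
  obtain ⟨g, hg⟩ := geometric_hahn_banach_open_point hC.interior isOpen_interior hzi
  refine ⟨z, hz, g, mem_normalCone_of_interior hC ⟨a, ha⟩ hzC fun c hc => (hg c hc).le, ?_⟩
  obtain ⟨α, β, hα, hβ, hαβ, rfl⟩ := hz
  have hxz : r ≤ ‖x - (α • a + β • w)‖ := by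
    by_contra! h
    exact hrC (by rwa [Metric.mem_ball, dist_comm, dist_eq_norm]) hzC
  have hwz : ‖w - (α • a + β • w)‖ = α * ‖w - a‖ := by
    rw [show w - (α • a + β • w) = α • (w - a) by
      linear_combination (norm := module) (-hαβ) • w, norm_smul, Real.norm_of_nonneg hα]
  have hwa : ‖w - a‖ ≤ ‖x - a‖ + δ := by
    have := norm_sub_le_norm_sub_add_norm_sub w x a
    rw [norm_sub_rev w x] at this
    linarith
  have htri := norm_sub_le_norm_sub_add_norm_sub x w (α • a + β • w)
  have hδα : δ < α * ρ := by nlinarith [mul_le_mul_of_nonneg_left hwa hα]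
  have hαpos : 0 < α := by nlinarith
  set t := β / α with ht
  have hp : a - t • (x - w) ∈ interior C := by
    apply hball
    rw [Metric.mem_ball, dist_eq_norm, sub_sub_cancel_left, norm_neg, norm_smul,
      Real.norm_of_nonneg (by positivity), ht, div_mul_eq_mul_div, div_lt_iff₀ hαpos]
    nlinarith [mul_le_mul_of_nonneg_right (show β ≤ 1 by linarith) (norm_nonneg (x - w))]
  have htα : t * α = β := div_mul_cancel₀ β hαpos.ne'
  have hpz : a - t • (x - w) = α • a + β • w - t • (x - (α • a + β • w)) := by
    linear_combination (norm := module) (-hαβ - htα) • a + (htα - t • hαβ) • w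
  exact apply_sub_pos_of_sub_smul_mem hg (by positivity) (hpz ▸ hp)

lemma mem_of_forall_normalCone_apply_nonpos (hCcl : IsClosed C) (hC : Convex ℝ C) {M : Set X}
    (hM : Convex ℝ M) {a x : X} (ha : a ∈ M ∩ interior C) (hx : x ∈ closure M)
    (hnormal : ∀ z ∈ M, ∀ g ∈ normalCone C z, g (x - z) ≤ 0) : x ∈ C := by
  by_contra hxC
  obtain ⟨w, hwM, z, hz, g, hg, hpos⟩ := ((mem_closure_iff_frequently.1 hx).and_eventually
    (eventually_exists_normalCone_apply_pos hCcl hC ha.2 hxC)).exists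
  exact (hnormal z (hM.segment_subset ha.1 hwM hz) g hg).not_gt hpos

end NormalCone

section LinearRelation
variable [NormedAddCommGroup X] [NormedSpace ℝ X] {A : X → Set (Dual' X)}

lemma LinearRel.combo_mem (hlin : LinearRel A) {a b : X} {a' b' : Dual' X} (ha : a' ∈ A a)
    (hb : b' ∈ A b) (s t : ℝ) : s • a' + t • b' ∈ A (s • a + t • b) :=
  hlin.2.1 _ _ _ _ (hlin.2.2 s a a' ha) (hlin.2.2 t b b' hb)

lemma LinearRel.convex_domOp (hlin : LinearRel A) : Convex ℝ (domOp A) := by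
  rintro a ⟨a', ha⟩ b ⟨b', hb⟩ s t - - -
  exact ⟨_, hlin.combo_mem ha hb s t⟩

lemma LinearRel.eq_zero_of_forall_lt (hlin : LinearRel A) {f : Dual' X} {c : ℝ}
    (hf : ∀ z ∈ domOp A, f z < c) {z : X} (hz : z ∈ domOp A) : f z = 0 := by
  obtain ⟨z', hz'⟩ := hz
  exact eq_zero_of_forall_mul_le fun K => by
    simpa using (hf _ ⟨_, hlin.2.2 K z z' hz'⟩).le

lemma MaxMonotone.mem_zero_of_eq_zero (hA : MaxMonotone A) (hlin : LinearRel A) {f : Dual' X}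
    (hf : ∀ z ∈ domOp A, f z = 0) : f ∈ A 0 :=
  hA.2 0 f fun y y' hy' => by
    simpa [hf y ⟨y', hy'⟩] using hA.1 y 0 y' 0 hy' hlin.1

lemma MaxMonotone.mem_closure_domOp (hA : MaxMonotone A) (hlin : LinearRel A) {u : X}
    {u' : Dual' X} (hu : u' ∈ A u) {x : X} {x' : Dual' X}
    (hrel : ∀ v' ∈ A u, 0 ≤ (x' - v') (x - u)) : x ∈ closure (domOp A) := by
  by_contra hx
  obtain ⟨f, c, hf, hfx⟩ :=
    geometric_hahn_banach_closed_point hlin.convex_domOp.closure isClosed_closure hx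
  have hf0 : ∀ z ∈ domOp A, f z = 0 := fun z =>
    hlin.eq_zero_of_forall_lt fun z hz => hf z (subset_closure hz)
  have hfA := hA.mem_zero_of_eq_zero hlin hf0
  have hxu : f (x - u) = 0 := eq_zero_of_forall_mul_le (c := (x' - u') (x - u)) fun K => by
    have h := hrel _ (by simpa using hlin.2.1 _ _ _ _ hu (hlin.2.2 K 0 f hfA))
    simp only [sub_apply, add_apply, smul_apply, smul_eq_mul] at h ⊢
    linarith
  have h0 := hf 0 (subset_closure ⟨0, hlin.1⟩)
  rw [map_sub, hf0 u ⟨u', hu⟩, sub_zero] at hxu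
  rw [map_zero] at h0
  linarith

lemma MaxMonotone.sub_smul_mem (hA : MaxMonotone A) {x : X} {x' n : Dual' X} {c : ℝ}
    (h : ∀ w w', w' ∈ A w → c * n (x - w) ≤ (x' - w') (x - w)) : x' - c • n ∈ A x :=
  hA.2 x _ fun w w' hw' => by
    have := h w w' hw'
    simp only [sub_apply, smul_apply, smul_eq_mul] at this ⊢
    linarith

def gapEpigraph (A : X → Set (Dual' X)) (x : X) (x' : Dual' X) : Set (X × ℝ) :=
  {p | ∃ z' ∈ A p.1, (x' - z') (x - p.1) ≤ p.2}

lemma convex_gapEpigraph (hmono : MonotoneOp A) (hlin : LinearRel A) (x : X) (x' : Dual' X) :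
    Convex ℝ (gapEpigraph A x x') := by
  rintro ⟨z₁, s₁⟩ ⟨z₁', hz₁', h₁⟩ ⟨z₂, s₂⟩ ⟨z₂', hz₂', h₂⟩ α β hα hβ hαβ
  refine ⟨α • z₁' + β • z₂', hlin.combo_mem hz₁' hz₂' α β, ?_⟩
  have hconcave : (x' - (α • z₁' + β • z₂')) (x - (α • z₁ + β • z₂)) =
      α * (x' - z₁') (x - z₁) + β * (x' - z₂') (x - z₂) - α * β * (z₁' - z₂') (z₁ - z₂) := by
    obtain rfl : β = 1 - α := by linarith
    simp only [sub_apply, add_apply, smul_apply, map_sub, map_add,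
      map_smul, smul_eq_mul]
    ring
  change (x' - (α • z₁' + β • z₂')) (x - (α • z₁ + β • z₂)) ≤ α * s₁ + β * s₂
  rw [hconcave]
  nlinarith [mul_nonneg (mul_nonneg hα hβ) (hmono z₁ z₂ z₁' z₂' hz₁' hz₂'),
    mul_le_mul_of_nonneg_left h₁ hα, mul_le_mul_of_nonneg_left h₂ hβ]

lemma MaxMonotone.mem_closure_gapEpigraph (hA : MaxMonotone A) (hlin : LinearRel A) {x : X}
    (hx : x ∈ closure (domOp A)) (x' : Dual' X) :
    (x, (0 : ℝ)) ∈ closure (gapEpigraph A x x') := by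
  by_contra hnot
  obtain ⟨F, u, hF, hFx⟩ := geometric_hahn_banach_closed_point
    (convex_gapEpigraph hA.1 hlin x x').closure isClosed_closure hnot
  obtain ⟨n, β, hFeq⟩ := exists_eq_apply_fst_add_mul_snd F
  replace hFx : u < n x := by simpa [hFeq] using hFx
  have hlt : ∀ z z', z' ∈ A z → n z + (x' - z') (x - z) * β < u := fun z z' hz' =>
    hFeq (z, _) ▸ hF _ (subset_closure ⟨z', hz', le_rfl⟩)
  have hβ : β ≤ 0 := nonpos_of_forall_mul_le (a := x' x) fun s hs => by
    have := hF (0, s) (subset_closure ⟨0, hlin.1, by simpa using hs⟩)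
    rw [hFeq, map_zero, zero_add] at this
    exact this.le
  rcases hβ.lt_or_eq with hβ | rfl
  · refine hnot (subset_closure ⟨x' - β⁻¹ • n, hA.sub_smul_mem fun z z' hz' => ?_, by simp⟩)
    rw [← div_eq_inv_mul, div_le_iff_of_neg hβ, map_sub n]
    linarith [hlt z z' hz']
  · have hle : ∀ z ∈ domOp A, n z ≤ u := fun z ⟨z', hz'⟩ => by simpa using (hlt z z' hz').le
    have : n x ≤ u := closure_minimal hle (isClosed_le n.continuous continuous_const) hx
    linarith

lemma MaxMonotone.exists_separating_gapEpigraph (hA : MaxMonotone A) (hlin : LinearRel A)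
    {D : Set X} (hD : Convex ℝ D) {a : X} (ha : a ∈ domOp A ∩ interior D) {x : X}
    {x' : Dual' X} (hxA : x ∈ closure (domOp A))
    (hgap : ∀ w w', w' ∈ A w → w ∈ interior D → 0 ≤ (x' - w') (x - w)) :
    ∃ (n : Dual' X) (β : ℝ) (u : ℝ), 0 < β ∧ (∀ c ∈ D, n c ≤ u) ∧ u ≤ n x ∧
      ∀ w w', w' ∈ A w → u ≤ n w + (x' - w') (x - w) * β := by
  have hdisj : Disjoint (interior D ×ˢ Iio (0 : ℝ)) (gapEpigraph A x x') := by
    rw [Set.disjoint_left]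
    rintro ⟨w, s⟩ ⟨hw, hs⟩ ⟨w', hw', hle⟩
    exact (hgap w w' hw' hw).not_gt (hle.trans_lt hs)
  have hconv : Convex ℝ (interior D ×ˢ Iio (0 : ℝ)) := hD.interior.prod (convex_Iio 0)
  have hopen : IsOpen (interior D ×ˢ Iio (0 : ℝ)) := isOpen_interior.prod isOpen_Iio
  obtain ⟨F, u, hF₁, hF₂⟩ :=
    geometric_hahn_banach_open hconv hopen (convex_gapEpigraph hA.1 hlin x x') hdisj
  obtain ⟨n, β, hFeq⟩ := exists_eq_apply_fst_add_mul_snd F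
  have hle : ∀ c ∈ D, n c ≤ u := fun c hc => by
    have hcl : (c, (0 : ℝ)) ∈ closure (interior D ×ˢ Iio 0) := by
      rw [closure_prod_eq, hD.closure_interior_eq_closure_of_nonempty_interior ⟨a, ha.2⟩,
        closure_Iio]
      exact ⟨subset_closure hc, le_refl (0 : ℝ)⟩
    have h : F (c, 0) ≤ u :=
      closure_minimal (fun p hp => (hF₁ p hp).le) (isClosed_le F.continuous continuous_const) hcl
    rwa [hFeq, zero_mul, add_zero] at h
  have hge : ∀ w w', w' ∈ A w → u ≤ n w + (x' - w') (x - w) * β := fun w w' hw' => by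
    have h := hF₂ (w, (x' - w') (x - w)) ⟨w', hw', le_rfl⟩
    rwa [hFeq] at h
  have hux : u ≤ n x := by
    have h : u ≤ F (x, 0) := closure_minimal hF₂ (isClosed_le continuous_const F.continuous)
      (hA.mem_closure_gapEpigraph hlin hxA x')
    rwa [hFeq, zero_mul, add_zero] at h
  have hβ₀ : 0 ≤ β := neg_nonpos.1 <| nonpos_of_forall_mul_le (a := 1) (c := u - n a)
    fun K hK => by
      have h := hF₁ (a, -K) ⟨ha.2, by simp; linarith⟩
      rw [hFeq] at h
      simp only at h
      linarith
  refine ⟨n, β, u, hβ₀.lt_of_ne fun hβ => ?_, hle, hux, hge⟩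
  obtain ⟨a', ha'⟩ := ha.1
  have h₁ := hF₁ (a, -1) ⟨ha.2, by norm_num⟩
  have h₂ := hge a a' ha'
  rw [hFeq, ← hβ, mul_zero, add_zero] at h₁
  rw [← hβ, mul_zero, add_zero] at h₂
  linarith

lemma MaxMonotone.exists_normalCone_sub_mem (hA : MaxMonotone A) (hlin : LinearRel A)
    {D : Set X} (hD : Convex ℝ D) {a : X} (ha : a ∈ domOp A ∩ interior D) {x : X}
    {x' : Dual' X} (hxD : x ∈ D) (hxA : x ∈ closure (domOp A))
    (hgap : ∀ w w', w' ∈ A w → w ∈ interior D → 0 ≤ (x' - w') (x - w)) :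
    ∃ ν ∈ normalCone D x, x' - ν ∈ A x := by
  obtain ⟨n, β, u, hβ, hle, hux, hge⟩ := hA.exists_separating_gapEpigraph hlin hD ha hxA hgap
  refine ⟨β⁻¹ • n, ⟨hxD, fun c hc => ?_⟩, hA.sub_smul_mem fun w w' hw' => ?_⟩
  · rw [smul_apply, smul_eq_mul, map_sub]
    exact mul_nonpos_of_nonneg_of_nonpos (inv_nonneg.2 hβ.le) (by linarith [hle c hc])
  · rw [← div_eq_inv_mul, div_le_iff₀ hβ, map_sub n]
    linarith [hge w w' hw', hle x hxD]

lemma MaxMonotone.mem_opSum_normalCone (hA : MaxMonotone A) (hlin : LinearRel A) {C : Set X}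
    (hCcl : IsClosed C) (hC : Convex ℝ C) {a : X} (ha : a ∈ domOp A ∩ interior C) {U : Set X}
    (hU : IsOpen U) (hUc : Convex ℝ U) {u : X} (hu : u ∈ U ∩ domOp (opSum A (normalCone C)))
    {x : X} {x' : Dual' X} (hxU : x ∈ U)
    (hrel : ∀ y y', y' ∈ opSum A (normalCone C) y → y ∈ U → 0 ≤ (x' - y') (x - y)) :
    x' ∈ opSum A (normalCone C) x := by
  have hrelA : ∀ z z' g, z' ∈ A z → g ∈ normalCone C z → z ∈ U →
      g (x - z) ≤ (x' - z') (x - z) := fun z z' g hz' hg hz => by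
    have := hrel z (z' + g) (add_mem_add hz' hg) hz
    rw [← sub_sub, sub_apply] at this
    linarith
  have hgap : ∀ z z', z' ∈ A z → z ∈ C ∩ U → 0 ≤ (x' - z') (x - z) := fun z z' hz' hz => by
    simpa using hrelA z z' 0 hz' (zero_mem_normalCone hz.1) hz.2
  obtain ⟨-, u', hu', ν₀, hν₀, -⟩ := hu.2
  have hxA : x ∈ closure (domOp A) :=
    hA.mem_closure_domOp hlin hu' fun v' hv' => hgap u v' hv' ⟨hν₀.1, hu.1⟩
  obtain ⟨b, ⟨hbA, hbC⟩, hbU⟩ := exists_mem_inter_interior_inter hlin.convex_domOp hC hU ha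
    ⟨⟨⟨u', hu'⟩, hν₀.1⟩, hu.1⟩
  have hxC : x ∈ C := by
    refine mem_of_forall_normalCone_apply_nonpos hCcl hC (hlin.convex_domOp.inter hUc)
      ⟨⟨hbA, hbU⟩, hbC⟩ (inter_comm U _ ▸ hU.inter_closure ⟨hxU, hxA⟩) ?_
    rintro z ⟨⟨z', hz'⟩, hzU⟩ g hg
    exact nonpos_of_forall_mul_le (a := 0) fun K hK => by
      simpa using hrelA z z' (K • g) hz' (smul_mem_normalCone hg hK) hzU
  have hb : b ∈ domOp A ∩ interior (C ∩ U) :=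
    ⟨hbA, by rw [interior_inter, hU.interior_eq]; exact ⟨hbC, hbU⟩⟩
  obtain ⟨ν, hν, hxν⟩ := hA.exists_normalCone_sub_mem hlin (hC.inter hUc) hb ⟨hxC, hxU⟩ hxA
    fun w w' hw' hw => hgap w w' hw' (interior_subset hw)
  exact ⟨x' - ν, hxν, ν, mem_normalCone_of_mem_normalCone_inter hC hU hxU hν, sub_add_cancel x' ν⟩

end LinearRelation

variable [NormedAddCommGroup X] [NormedSpace ℝ X] [CompleteSpace X]

theorem stmt4_general (A : X → Set (Dual' X)) (hA : MaxMonotone A) (hlin : LinearRel A)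
    (C : Set X) (hCcl : IsClosed C) (hCconv : Convex ℝ C)
    (hint : (domOp A ∩ interior C).Nonempty) :
    FPV (opSum A (normalCone C)) := by
  obtain ⟨a, ha⟩ := hint
  obtain ⟨a', ha'⟩ := ha.1
  have haB : a ∈ domOp (opSum A (normalCone C)) :=
    ⟨a' + 0, add_mem_add ha' (zero_mem_normalCone (interior_subset ha.2))⟩
  refine ⟨⟨hA.1.opSum (monotoneOp_normalCone C), fun x x' hrel => ?_⟩,
    fun U hU hUc ⟨u, hu⟩ x x' hxU hrel => ?_⟩
  · exact hA.mem_opSum_normalCone hlin hCcl hCconv ha isOpen_univ convex_univ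
      ⟨mem_univ a, haB⟩ (mem_univ x) fun y y' hy' _ => hrel y y' hy'
  · exact hA.mem_opSum_normalCone hlin hCcl hCconv ha hU hUc hu hxU hrel

theorem stmt4 (A : X → Set (Dual' X)) (hA : MaxMonotone A) (hlin : LinearRel A)
    (C : Set X) (hCne : C.Nonempty) (hCcl : IsClosed C) (hCconv : Convex ℝ C)
    (hint : (domOp A ∩ interior C).Nonempty) :
    FPV (opSum A (normalCone C)) :=
  stmt4_general A hA hlin C hCcl hCconv hint
end
end

section
/- Let X be a real Banach space and A, B : X ⇉ X* maximal monotone with dom A ∩ int dom B ≠ ∅, A + N_{cl(dom B)} of type (FPV), and dom A ∩ cl(dom B) ⊆ dom B. Suppose 0 ∈ dom A ∩ int dom B, (0,0) ∈ gra A ∩ gra B, and (z,z*) ∈ dom F_{A+B}. Then for every λ ∈ (0,1), F_{A+B}(λz, λz*) ≥ λ²⟨z, z*⟩. -/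
open Set Filter Pointwise

noncomputable section

variable {X : Type*}

/-!
Write `T = A + N_{cl(dom B)}`. If `F_{A+B}(w, w*) < ⟨w, w*⟩`, then `(w, w*)` is monotonically
related to `gra (A + B)` with a uniform positive margin. Maximality of `B` lets it absorb the
normal cone, so each `(y, y*) ∈ gra T` becomes `(y, y* + b) ∈ gra (A + B)` with `b ∈ B y`, and
the margin survives up to `b (w - y)`, which is small when `B` is bounded near `w`. Then (FPV) of
`T` on a small ball around `w` gives `w* ∈ T w`, hence `w* + b ∈ (A + B) w`, against the margin.

This needs `w ∈ cl(dom T)`, which holds as soon as `F_{A+B}(w, w*) < ∞`: otherwise (FPV) on a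
tube around the segment `[0, w]`, with `w*` tilted by a large multiple of a norming functional of
`w`, would put `w` into `dom T`. In the theorem, `0 ∈ int (dom B)` and `z ∈ cl(dom T) ⊆ cl(dom B)` put
`λz` into `int (conv (dom B))`, where `B` is locally bounded by Rockafellar's theorem.
-/

open Metric Topology

section MonotoneOperators

variable [NormedAddCommGroup X] [NormedSpace ℝ X] {B : X → Set (Dual' X)}

lemma neg_norm_mul_norm_le_apply (f : Dual' X) (x : X) : -(‖f‖ * ‖x‖) ≤ f x :=
  (neg_le_neg (f.le_opNorm x)).trans (by simpa using neg_abs_le (f x))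

lemma apply_sub_sub_eq (x' y' : Dual' X) (x y : X) :
    (x' - y') (x - y) = x' x - (y' x + x' y - y' y) := by
  simp only [sub_apply, map_sub]
  ring

lemma fitz_le_coe_iff {T : X → Set (Dual' X)} {p : X × Dual' X} {c : ℝ} :
    fitz T p ≤ c ↔ ∀ y, ∀ y' ∈ T y, y' p.1 + p.2 y - y' y ≤ c := by
  simp only [fitz, iSup₂_le_iff, mem_ofPred_eq, Prod.forall, EReal.coe_le_coe_iff]

def LocallyBoundedAt (B : X → Set (Dual' X)) (x : X) : Prop :=
  ∃ K, ∀ᶠ y in 𝓝 x, ∀ y' ∈ B y, ‖y'‖ ≤ K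

/-- The sublevel set `{f ≤ m}` of Rockafellar's convex lower semicontinuous function
`f x = sup {y' (x - y) | y' ∈ B y, ‖y‖ ≤ R}`. -/
def pairingSublevel (B : X → Set (Dual' X)) (R m : ℝ) : Set X :=
  {x | ∀ y, ∀ y' ∈ B y, ‖y‖ ≤ R → y' (x - y) ≤ m}

lemma isClosed_pairingSublevel (B : X → Set (Dual' X)) (R m : ℝ) :
    IsClosed (pairingSublevel B R m) := by
  simp only [pairingSublevel, ofPred_forall]
  exact isClosed_iInter fun y => isClosed_iInter fun y' => isClosed_iInter fun _ =>
    isClosed_iInter fun _ => isClosed_le (by fun_prop) continuous_const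

lemma pairingSublevel_mono {R m m' : ℝ} (h : m ≤ m') :
    pairingSublevel B R m ⊆ pairingSublevel B R m' :=
  fun _ hx y y' hy' hyR => (hx y y' hy' hyR).trans h

lemma smul_add_mem_pairingSublevel {R m m' t : ℝ} {x x' : X} (hx : x ∈ pairingSublevel B R m)
    (hx' : x' ∈ pairingSublevel B R m') (ht₀ : 0 ≤ t) (ht₁ : t ≤ 1) :
    t • x + (1 - t) • x' ∈ pairingSublevel B R (t * m + (1 - t) * m') := by
  intro y y' hy' hyR
  have hsplit : t • x + (1 - t) • x' - y = t • (x - y) + (1 - t) • (x' - y) := by module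
  rw [hsplit, map_add, map_smul, map_smul, smul_eq_mul, smul_eq_mul]
  have := hx y y' hy' hyR
  have := hx' y y' hy' hyR
  nlinarith

lemma convex_iUnion_pairingSublevel (B : X → Set (Dual' X)) (R : ℝ) :
    Convex ℝ (⋃ n : ℕ, pairingSublevel B R n) := by
  intro x hx x' hx' a b ha hb hab
  obtain ⟨n, hn⟩ := mem_iUnion.mp hx
  obtain ⟨n', hn'⟩ := mem_iUnion.mp hx'
  obtain rfl : b = 1 - a := by linarith
  refine mem_iUnion.mpr ⟨max n n', pairingSublevel_mono ?_
    (smul_add_mem_pairingSublevel hn hn' ha (by linarith))⟩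
  have : (n : ℝ) ≤ max n n' := by exact_mod_cast le_max_left n n'
  have : (n' : ℝ) ≤ max n n' := by exact_mod_cast le_max_right n n'
  nlinarith

lemma MonotoneOp.domOp_subset_iUnion_pairingSublevel (hB : MonotoneOp B) (R : ℝ) :
    domOp B ⊆ ⋃ n : ℕ, pairingSublevel B R n := by
  rintro x ⟨x', hx'⟩
  refine mem_iUnion.mpr ⟨⌈‖x'‖ * (‖x‖ + R)⌉₊, fun y y' hy' hyR => ?_⟩
  have hmono : 0 ≤ (x' - y') (x - y) := hB x y x' y' hx' hy'
  rw [sub_apply] at hmono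
  calc y' (x - y) ≤ x' (x - y) := by linarith
    _ ≤ ‖x'‖ * ‖x - y‖ := (le_abs_self _).trans (x'.le_opNorm _)
    _ ≤ ‖x'‖ * (‖x‖ + R) := by gcongr; exact (norm_sub_le _ _).trans (by linarith)
    _ ≤ _ := Nat.le_ceil _

lemma exists_ball_subset_pairingSublevel [CompleteSpace X] {R : ℝ} {x : X}
    (hx : x ∈ interior (⋃ n : ℕ, pairingSublevel B R n)) :
    ∃ x₀, ∃ ε > 0, ∃ m : ℝ, ball x₀ ε ⊆ pairingSublevel B R m := by
  obtain ⟨r, hr, hball⟩ := Metric.isOpen_iff.mp isOpen_interior x hx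
  have hcover : ⋃ n : ℕ, (pairingSublevel B R n ∪ (ball x r)ᶜ) = univ := by
    refine eq_univ_of_forall fun y => ?_
    by_cases hy : y ∈ ball x r
    · obtain ⟨n, hn⟩ := mem_iUnion.mp (interior_subset (hball hy))
      exact mem_iUnion.mpr ⟨n, Or.inl hn⟩
    · exact mem_iUnion.mpr ⟨0, Or.inr hy⟩
  obtain ⟨x₀, hx₀r, hx₀⟩ := (dense_iUnion_interior_of_closed
    (fun n : ℕ => (isClosed_pairingSublevel B R n).union isOpen_ball.isClosed_compl)
    hcover).inter_open_nonempty (ball x r) isOpen_ball (nonempty_ball.mpr hr)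
  obtain ⟨n, hn⟩ := mem_iUnion.mp hx₀
  obtain ⟨ε, hε, hεsub⟩ :=
    Metric.isOpen_iff.mp (isOpen_ball.inter isOpen_interior) x₀ ⟨hx₀r, hn⟩
  refine ⟨x₀, ε, hε, n, fun y hy => ?_⟩
  obtain ⟨hyr, hyn⟩ := hεsub hy
  exact (interior_subset hyn).resolve_right (not_not.mpr hyr)

lemma exists_ball_subset_pairingSublevel_of_mem_interior {R m ε : ℝ} {x x₀ : X}
    (hx : x ∈ interior (⋃ n : ℕ, pairingSublevel B R n)) (hε : 0 < ε)
    (h₀ : ball x₀ ε ⊆ pairingSublevel B R m) :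
    ∃ δ > 0, ∃ M : ℝ, ball x δ ⊆ pairingSublevel B R M := by
  have hcont : ContinuousAt (fun t : ℝ => x₀ + t⁻¹ • (x - x₀)) 1 := by
    fun_prop (disch := norm_num)
  have hlim : Tendsto (fun t : ℝ => x₀ + t⁻¹ • (x - x₀)) (𝓝[<] 1) (𝓝 x) := by
    simpa using hcont.tendsto.mono_left nhdsWithin_le_nhds
  obtain ⟨t, hxt, ht⟩ := ((hlim.eventually (mem_interior_iff_mem_nhds.mp hx)).and
    (Ioo_mem_nhdsLT zero_lt_one)).exists
  obtain ⟨n, hn⟩ := mem_iUnion.mp hxt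
  have ht₁ : 0 < 1 - t := sub_pos.mpr ht.2
  refine ⟨(1 - t) * ε, by positivity, t * n + (1 - t) * m, fun y hy => ?_⟩
  -- `x = t • (x₀ + t⁻¹ • (x - x₀)) + (1 - t) • x₀`: shrink `ball x₀ ε` towards that point
  have hw : x₀ + (1 - t)⁻¹ • (y - x) ∈ ball x₀ ε := by
    rw [mem_ball, dist_eq_norm, add_sub_cancel_left, norm_smul, Real.norm_eq_abs,
      abs_of_pos (inv_pos.mpr ht₁), ← dist_eq_norm, inv_mul_lt_iff₀ ht₁]
    exact hy
  convert smul_add_mem_pairingSublevel hn (h₀ hw) ht.1.le ht.2.le using 1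
  rw [smul_add, smul_add, smul_smul, smul_smul, mul_inv_cancel₀ ht.1.ne',
    mul_inv_cancel₀ ht₁.ne']
  module

lemma locallyBoundedAt_of_ball_subset_pairingSublevel {R M ε : ℝ} {x : X} (hε : 0 < ε)
    (hxR : ‖x‖ < R) (h : ball x ε ⊆ pairingSublevel B R M) : LocallyBoundedAt B x := by
  refine ⟨M / (ε / 2), Metric.eventually_nhds_iff.mpr
    ⟨min (ε / 2) (R - ‖x‖), lt_min (by positivity) (sub_pos.mpr hxR), fun y hy y' hy' => ?_⟩⟩
  rw [dist_eq_norm] at hy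
  have hyR : ‖y‖ ≤ R := by
    linarith [norm_le_norm_add_norm_sub' y x, min_le_right (ε / 2) (R - ‖x‖)]
  have hbound : ∀ u, ‖u‖ ≤ ε / 2 → y' u ≤ M := fun u hu => by
    have hyu : y + u ∈ ball x ε := by
      rw [mem_ball, dist_eq_norm, add_sub_right_comm]
      linarith [norm_add_le (y - x) u, min_le_left (ε / 2) (R - ‖x‖)]
    simpa using h hyu y y' hy' hyR
  refine ContinuousLinearMap.opNorm_bound_of_ball_bound (by positivity) M y' fun u hu => ?_
  rw [mem_closedBall_zero_iff] at hu
  have hneg := hbound (-u) (by rwa [norm_neg])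
  rw [map_neg] at hneg
  exact abs_le.mpr ⟨by linarith, hbound u hu⟩

theorem MonotoneOp.locallyBoundedAt [CompleteSpace X] (hB : MonotoneOp B) {x : X}
    (hx : x ∈ interior (convexHull ℝ (domOp B))) : LocallyBoundedAt B x := by
  have hD : x ∈ interior (⋃ n : ℕ, pairingSublevel B (‖x‖ + 1) n) :=
    interior_mono (convexHull_min (hB.domOp_subset_iUnion_pairingSublevel _)
      (convex_iUnion_pairingSublevel B _)) hx
  obtain ⟨x₀, ε, hε, m, h₀⟩ := exists_ball_subset_pairingSublevel hD
  obtain ⟨δ, hδ, M, hM⟩ := exists_ball_subset_pairingSublevel_of_mem_interior hD hε h₀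
  exact locallyBoundedAt_of_ball_subset_pairingSublevel hδ (lt_add_one _) hM

end MonotoneOperators

section SumWithNormalCone

variable [NormedAddCommGroup X] [NormedSpace ℝ X] {A B : X → Set (Dual' X)}

abbrev opSumNormalCone (A B : X → Set (Dual' X)) : X → Set (Dual' X) :=
  opSum A (normalCone (closure (domOp B)))

lemma MaxMonotone.add_mem_of_mem_normalCone (hB : MaxMonotone B) {x : X} {b n : Dual' X}
    (hb : b ∈ B x) (hn : n ∈ normalCone (closure (domOp B)) x) : b + n ∈ B x := by
  refine hB.2 x (b + n) fun y y' hy' => ?_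
  have hmono : 0 ≤ (b - y') (x - y) := hB.1 x y b y' hb hy'
  have hcone : n (y - x) ≤ 0 := hn.2 y (subset_closure ⟨y', hy'⟩)
  have hsplit : (b + n - y') (x - y) = (b - y') (x - y) - n (y - x) := by
    simp only [sub_apply, add_apply, map_sub]
    ring
  linarith

lemma exists_add_mem_opSum (hB : MaxMonotone B) (hsub : domOp A ∩ closure (domOp B) ⊆ domOp B)
    {y : X} {y' : Dual' X} (hy' : y' ∈ opSumNormalCone A B y) :
    ∃ b ∈ B y, y' + b ∈ opSum A B y := by
  obtain ⟨u, hu, n, hn, rfl⟩ := hy'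
  obtain ⟨b, hb⟩ := hsub ⟨⟨u, hu⟩, hn.1⟩
  exact ⟨b, hb, u, hu, b + n, hB.add_mem_of_mem_normalCone hb hn, by dsimp only; abel⟩

lemma domOp_opSumNormalCone_subset (hsub : domOp A ∩ closure (domOp B) ⊆ domOp B) :
    domOp (opSumNormalCone A B) ⊆ domOp B := by
  rintro y ⟨-, u, hu, n, hn, -⟩
  exact hsub ⟨⟨u, hu⟩, hn.1⟩

lemma mem_domOp_opSumNormalCone {x : X} (hA : x ∈ domOp A) (hB : x ∈ domOp B) :
    x ∈ domOp (opSumNormalCone A B) := by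
  obtain ⟨u, hu⟩ := hA
  exact ⟨u + 0, add_mem_add hu ⟨subset_closure hB, fun _ _ => by simp⟩⟩

lemma MonotoneOp.neg_mul_norm_le_apply (hB : MonotoneOp B) {q y d : X} {b : Dual' X} {K μ : ℝ}
    (hq : q ∈ domOp B) (hK : ∀ q' ∈ B q, ‖q'‖ ≤ K) (hb : b ∈ B y) (hμ : 0 ≤ μ)
    (hyq : y - q = μ • d) : -(K * ‖d‖) ≤ b d := by
  rcases hμ.eq_or_lt with rfl | hμ
  · rw [zero_smul, sub_eq_zero] at hyq
    subst hyq
    exact (neg_le_neg (by gcongr; exact hK b hb)).trans (neg_norm_mul_norm_le_apply b d)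
  · obtain ⟨q', hq'⟩ := hq
    have hmono : 0 ≤ μ * (b - q') d := by simpa [hyq] using hB y q b q' hb hq'
    have hle : q' d ≤ b d := by
      have := (mul_nonneg_iff_of_pos_left hμ).mp hmono
      rw [sub_apply] at this
      linarith
    exact (neg_le_neg (by gcongr; exact hK q' hq')).trans
      ((neg_norm_mul_norm_le_apply q' d).trans hle)

lemma exists_smul_sub_of_mem_segment_add_ball {w y : X} {r : ℝ}
    (hy : y ∈ segment ℝ 0 w + ball 0 r) :
    ∃ s ∈ Icc (0 : ℝ) 1, ∃ e, ‖e‖ < r ∧ w - y = s • w - e := by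
  obtain ⟨_, ⟨a, s, ha, hs, has, rfl⟩, e, he, rfl⟩ := hy
  refine ⟨a, ⟨ha, by linarith⟩, e, by simpa using he, ?_⟩
  linear_combination (norm := module) -has • w

lemma norm_sub_lt_of_mem_segment_add_ball {w y : X} {r : ℝ}
    (hy : y ∈ segment ℝ 0 w + ball 0 r) : ‖w - y‖ < ‖w‖ + r := by
  obtain ⟨s, hs, e, he, hwy⟩ := exists_smul_sub_of_mem_segment_add_ball hy
  rw [hwy]
  calc ‖s • w - e‖ ≤ s * ‖w‖ + ‖e‖ := by
        simpa [norm_smul, abs_of_nonneg hs.1] using norm_sub_le (s • w) e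
    _ < ‖w‖ + r := by nlinarith [norm_nonneg w, hs.2]

lemma norm_sub_le_apply_of_mem_segment_add_ball {w y : X} {r : ℝ} {v : Dual' X}
    (hv : ‖v‖ ≤ 1) (hvw : v w = ‖w‖) (hy : y ∈ segment ℝ 0 w + ball 0 r) :
    ‖w - y‖ - 2 * r ≤ v (w - y) := by
  obtain ⟨s, hs, e, he, hwy⟩ := exists_smul_sub_of_mem_segment_add_ball hy
  have hnorm : ‖w - y‖ ≤ s * ‖w‖ + ‖e‖ := by
    simpa [hwy, norm_smul, abs_of_nonneg hs.1] using norm_sub_le (s • w) e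
  have hve : v e ≤ ‖e‖ := by
    nlinarith [le_abs_self (v e), v.le_opNorm e, Real.norm_eq_abs (v e), norm_nonneg e]
  have hvy : v (w - y) = s * ‖w‖ - v e := by rw [hwy, map_sub, map_smul, hvw, smul_eq_mul]
  linarith

lemma exists_ray_of_mem_segment_add_ball {w y : X} {r : ℝ}
    (hy : y ∈ segment ℝ 0 w + ball 0 r) (hr : r < ‖w - y‖) :
    ∃ (q : X) (μ : ℝ), 0 ≤ μ ∧ y - q = μ • (w - y) ∧ ‖q‖ * (‖w - y‖ - r) ≤ r * ‖w‖ := by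
  obtain ⟨s, hs, e, he, hwy⟩ := exists_smul_sub_of_mem_segment_add_ball hy
  have hnorm : ‖w - y‖ ≤ s * ‖w‖ + ‖e‖ := by
    simpa [hwy, norm_smul, abs_of_nonneg hs.1] using norm_sub_le (s • w) e
  have hs₀ : 0 < s := by
    by_contra! h
    nlinarith [norm_nonneg w]
  refine ⟨s⁻¹ • e, (1 - s) / s, div_nonneg (by linarith [hs.2]) hs₀.le, ?_, ?_⟩
  · have hy' : y = w - (s • w - e) := by rw [← hwy]; abel
    rw [hy']
    match_scalars <;> field_simp <;> ring
  · rw [norm_smul, Real.norm_eq_abs, abs_of_pos (inv_pos.mpr hs₀)]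
    calc s⁻¹ * ‖e‖ * (‖w - y‖ - r) ≤ s⁻¹ * ‖e‖ * (s * ‖w‖) := by
          gcongr; linarith
      _ = ‖e‖ * ‖w‖ := by field_simp
      _ ≤ r * ‖w‖ := by gcongr

lemma MonotoneOp.neg_mul_le_apply_of_mem_segment_add_ball (hB : MonotoneOp B) {w y : X}
    {b : Dual' X} {K ρ η r : ℝ}
    (hρ : 0 < ρ) (hρK : ∀ q ∈ ball (0 : X) ρ, q ∈ domOp B ∧ ∀ q' ∈ B q, ‖q'‖ ≤ K) (hη : 0 < η)
    (hr : 4 * r ≤ η) (hrw : r * ‖w‖ ≤ ρ * η / 2) (hy : y ∈ segment ℝ 0 w + ball 0 r)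
    (hηy : η ≤ ‖w - y‖) (hb : b ∈ B y) : -(|K| * (‖w‖ + r)) ≤ b (w - y) := by
  obtain ⟨q, μ, hμ, hyq, hq⟩ := exists_ray_of_mem_segment_add_ball hy (by linarith)
  have hqρ : ‖q‖ < ρ := by nlinarith [norm_nonneg q]
  obtain ⟨hqB, hqK⟩ := hρK q (mem_ball_zero_iff.mpr hqρ)
  have := hB.neg_mul_norm_le_apply hqB (fun q' hq' => (hqK q' hq').trans (le_abs_self K)) hb hμ hyq
  nlinarith [norm_sub_lt_of_mem_segment_add_ball hy, abs_nonneg K]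

lemma mem_opSumNormalCone_of_forall (hB : MaxMonotone B) (hFPV : FPV (opSumNormalCone A B))
    (hsub : domOp A ∩ closure (domOp B) ⊆ domOp B) {U : Set X} (hU : IsOpen U)
    (hUc : Convex ℝ U) (hUT : (U ∩ domOp (opSumNormalCone A B)).Nonempty) {w : X} {w' : Dual' X}
    (hw : w ∈ U)
    (h : ∀ y ∈ U ∩ domOp (opSumNormalCone A B), ∀ a' ∈ opSum A B y, ∀ b ∈ B y,
      0 ≤ (w' - a') (w - y) + b (w - y)) :
    w' ∈ opSumNormalCone A B w := by
  refine hFPV.2 U hU hUc hUT w w' hw fun y y' hy' hyU => ?_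
  obtain ⟨b, hb, hy'b⟩ := exists_add_mem_opSum hB hsub hy'
  have hsplit : (w' - y') (w - y) = (w' - (y' + b)) (w - y) + b (w - y) := by
    simp only [sub_apply, add_apply]
    ring
  exact hsplit ▸ h y ⟨hyU, y', hy'⟩ _ hy'b b hb

theorem mem_closure_domOp_opSumNormalCone (hB : MaxMonotone B)
    (hFPV : FPV (opSumNormalCone A B)) (hsub : domOp A ∩ closure (domOp B) ⊆ domOp B)
    (hA0 : (0 : X) ∈ domOp A) (hB0 : (0 : X) ∈ interior (domOp B)) (hloc : LocallyBoundedAt B 0)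
    {w : X} {w' : Dual' X} (hw : fitz (opSum A B) (w, w') ≠ ⊤) :
    w ∈ closure (domOp (opSumNormalCone A B)) := by
  obtain ⟨M, hM, -⟩ := EReal.lt_iff_exists_real_btwn.mp (lt_top_iff_ne_top.mpr hw)
  replace hM := fitz_le_coe_iff.mp hM.le
  by_contra hwT
  obtain ⟨η, hη, hfar⟩ : ∃ η > 0, ∀ y ∈ domOp (opSumNormalCone A B), η ≤ ‖w - y‖ := by
    simpa [Metric.mem_closure_iff, dist_eq_norm] using hwT
  obtain ⟨K, hK⟩ := hloc
  obtain ⟨ρ, hρ, hρK⟩ := Metric.eventually_nhds_iff.mp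
    ((show ∀ᶠ q in 𝓝 (0 : X), q ∈ domOp B from mem_interior_iff_mem_nhds.mp hB0).and hK)
  obtain ⟨v, hv, hvw⟩ := exists_dual_vector'' ℝ w
  set r := min (η / 4) (ρ * η / (2 * (‖w‖ + 1)))
  have hr : 0 < r := lt_min (by positivity) (by positivity)
  have hr4 : 4 * r ≤ η := by linarith [min_le_left (η / 4) (ρ * η / (2 * (‖w‖ + 1)))]
  have hrw : r * ‖w‖ ≤ ρ * η / 2 := by
    have := min_le_right (η / 4) (ρ * η / (2 * (‖w‖ + 1)))
    rw [le_div_iff₀ (by positivity)] at this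
    nlinarith
  set κ := |K| * (‖w‖ + r)
  set τ := |M + κ - w' w| / (η / 2)
  have hU0 : (0 : X) ∈ segment ℝ 0 w + ball 0 r :=
    ⟨0, left_mem_segment ℝ 0 w, 0, mem_ball_self hr, add_zero 0⟩
  have hw'T : w' + τ • v ∈ opSumNormalCone A B w := by
    refine mem_opSumNormalCone_of_forall hB hFPV hsub isOpen_ball.add_left
      ((convex_segment 0 w).add (convex_ball 0 r))
      ⟨0, hU0, mem_domOp_opSumNormalCone hA0 (interior_subset hB0)⟩
      ⟨w, right_mem_segment ℝ 0 w, 0, mem_ball_self hr, add_zero w⟩ ?_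
    rintro y ⟨hyU, hyT⟩ a' ha' b hb
    have hηy := hfar y hyT
    have hby : -κ ≤ b (w - y) := hB.1.neg_mul_le_apply_of_mem_segment_add_ball
      hρ (fun q hq => hρK hq) hη hr4 hrw hyU hηy hb
    have hvy : η / 2 ≤ v (w - y) := by
      linarith [norm_sub_le_apply_of_mem_segment_add_ball hv hvw hyU]
    have hτ : M + κ - w' w ≤ τ * v (w - y) := (le_abs_self _).trans <| by
      rw [← div_mul_cancel₀ |M + κ - w' w| (by positivity : η / 2 ≠ 0)]
      gcongr
    have hsplit : (w' + τ • v - a') (w - y) = (w' - a') (w - y) + τ * v (w - y) := by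
      simp only [sub_apply, add_apply, smul_apply, smul_eq_mul]
      ring
    rw [hsplit, apply_sub_sub_eq]
    linarith [hM y a' ha']
  exact hwT (subset_closure ⟨_, hw'T⟩)

theorem coe_apply_le_fitz_of_mem_closure (hB : MaxMonotone B)
    (hFPV : FPV (opSumNormalCone A B)) (hsub : domOp A ∩ closure (domOp B) ⊆ domOp B)
    {w : X} {w' : Dual' X} (hw : w ∈ closure (domOp (opSumNormalCone A B)))
    (hloc : LocallyBoundedAt B w) : ((w' w : ℝ) : EReal) ≤ fitz (opSum A B) (w, w') := by
  by_contra hlt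
  obtain ⟨c, hc, hcw⟩ := EReal.lt_iff_exists_real_btwn.mp (not_le.mp hlt)
  have hδ : 0 < w' w - c := sub_pos.mpr (EReal.coe_lt_coe_iff.mp hcw)
  have hmargin : ∀ y, ∀ a' ∈ opSum A B y, w' w - c ≤ (w' - a') (w - y) := fun y a' ha' => by
    rw [apply_sub_sub_eq]
    linarith [fitz_le_coe_iff.mp hc.le y a' ha']
  obtain ⟨K, hK⟩ := hloc
  obtain ⟨ε, hε, hεK⟩ := Metric.eventually_nhds_iff.mp hK
  set r := min ε ((w' w - c) / (|K| + 1))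
  have hr : 0 < r := lt_min hε (by positivity)
  have hKr : |K| * r ≤ w' w - c := by
    have := min_le_right ε ((w' w - c) / (|K| + 1))
    rw [le_div_iff₀ (by positivity)] at this
    nlinarith
  have hw'T : w' ∈ opSumNormalCone A B w := by
    refine mem_opSumNormalCone_of_forall hB hFPV hsub isOpen_ball (convex_ball w r)
      (mem_closure_iff.mp hw _ isOpen_ball (mem_ball_self hr)) (mem_ball_self hr) ?_
    rintro y ⟨hyU, -⟩ a' ha' b hb
    have hyw : ‖w - y‖ < r := by rwa [← dist_eq_norm, dist_comm]
    have hbK : ‖b‖ ≤ |K| := (hεK (hyU.trans_le (min_le_left _ _)) b hb).trans (le_abs_self K)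
    have : ‖b‖ * ‖w - y‖ ≤ |K| * r := by gcongr
    linarith [neg_norm_mul_norm_le_apply b (w - y), hmargin y a' ha']
  obtain ⟨b, -, hb⟩ := exists_add_mem_opSum hB hsub hw'T
  have := hmargin w _ hb
  simp only [sub_self, map_zero] at this
  linarith

theorem coe_apply_le_fitz (hB : MaxMonotone B) (hFPV : FPV (opSumNormalCone A B))
    (hsub : domOp A ∩ closure (domOp B) ⊆ domOp B) (hA0 : (0 : X) ∈ domOp A)
    (hB0 : (0 : X) ∈ interior (domOp B)) (hloc₀ : LocallyBoundedAt B 0) {w : X} {w' : Dual' X}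
    (hloc : LocallyBoundedAt B w) : ((w' w : ℝ) : EReal) ≤ fitz (opSum A B) (w, w') := by
  by_cases htop : fitz (opSum A B) (w, w') = ⊤
  · simp [htop]
  · exact coe_apply_le_fitz_of_mem_closure hB hFPV hsub
      (mem_closure_domOp_opSumNormalCone hB hFPV hsub hA0 hB0 hloc₀ htop) hloc

end SumWithNormalCone

variable [NormedAddCommGroup X] [NormedSpace ℝ X] [CompleteSpace X]

theorem stmt15_general (A B : X → Set (Dual' X)) (hB : MaxMonotone B)
    (hFPV : FPV (opSum A (normalCone (closure (domOp B)))))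
    (hsub : domOp A ∩ closure (domOp B) ⊆ domOp B)
    (h0 : (0 : X) ∈ domOp A ∩ interior (domOp B))
    (z : X) (z' : Dual' X) (hz : fitz (opSum A B) (z, z') < ⊤) :
    ∀ l : ℝ, 0 < l → l < 1 →
      ((l ^ 2 * z' z : ℝ) : EReal) ≤ fitz (opSum A B) (l • z, l • z') := by
  intro l hl₀ hl₁
  have h0B : (0 : X) ∈ interior (convexHull ℝ (domOp B)) :=
    interior_mono (subset_convexHull ℝ _) h0.2
  have hloc₀ := hB.1.locallyBoundedAt h0B
  have hzB : z ∈ closure (convexHull ℝ (domOp B)) :=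
    closure_mono ((domOp_opSumNormalCone_subset hsub).trans (subset_convexHull ℝ _))
      (mem_closure_domOp_opSumNormalCone hB hFPV hsub h0.1 h0.2 hloc₀ hz.ne)
  have hlz : l • z ∈ interior (convexHull ℝ (domOp B)) := by
    simpa using (convex_convexHull ℝ _).combo_interior_closure_mem_interior h0B hzB
      (sub_pos.mpr hl₁) hl₀.le (sub_add_cancel 1 l)
  have hpair : (l • z') (l • z) = l ^ 2 * z' z := by
    simp only [smul_apply, map_smul, smul_eq_mul]
    ring
  rw [← hpair]
  exact coe_apply_le_fitz hB hFPV hsub h0.1 h0.2 hloc₀ (hB.1.locallyBoundedAt hlz)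

theorem stmt15 (A B : X → Set (Dual' X)) (hA : MaxMonotone A) (hB : MaxMonotone B)
    (hint : (domOp A ∩ interior (domOp B)).Nonempty)
    (hFPV : FPV (opSum A (normalCone (closure (domOp B)))))
    (hsub : domOp A ∩ closure (domOp B) ⊆ domOp B)
    (h0 : (0 : X) ∈ domOp A ∩ interior (domOp B))
    (h0A : (0 : Dual' X) ∈ A 0) (h0B : (0 : Dual' X) ∈ B 0)
    (z : X) (z' : Dual' X) (hz : fitz (opSum A B) (z, z') < ⊤) :
    ∀ l : ℝ, 0 < l → l < 1 →
      ((l ^ 2 * z' z : ℝ) : EReal) ≤ fitz (opSum A B) (l • z, l • z') :=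
  stmt15_general A B hB hFPV hsub h0 z z' hz
end
end

section
/- Let X be a real Banach space, B : X ⇉ X* monotone, 0 ∈ int dom B with local bound: there exist δ > 0, M > 0 such that By ≠ ∅ and sup_{y*∈By}‖y*‖ ≤ M for all y ∈ δ𝔹_X. Let (z_n, v_n*) ∈ gra B with z_n → βz for some z ∈ X and β ∈ (0,1), and suppose ‖v_n*‖ → ∞ with v_n* ≠ 0. Then limsup_{n→∞} ⟨z − z_n, v_n*⟩ ≥ 0. -/
open Set Filter Pointwise

noncomputable section

variable {X : Type*}

variable [NormedAddCommGroup X] [NormedSpace ℝ X] [CompleteSpace X]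

private lemma stmt16_aux (δ M β c a b V e Z K : ℝ) (hδ : 0 < δ) (hM : 0 < M)
    (hβ0 : 0 < β) (hβ1 : β < 1) (hc0 : c < 0)
    (hk : δ/2*V ≤ b + M*(Z+δ)) (hab : a - b ≤ c) (h3' : b - β*a ≤ V*e)
    (hZ : Z ≤ K + e) (he1 : e ≤ (1-β)*δ/4) (he2 : e ≤ 1) (he0 : 0 ≤ e)
    (hK : 0 ≤ K) (hV : 4*M*(K+1+δ)/δ + 1 ≤ V) : False := by
  have hB0pos : 0 < 4*M*(K+1+δ)/δ := by positivity
  have hVpos : 0 < V := by linarith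
  have s1 : δ/2 * V - M*(Z+δ) - V*e ≤ β * a := by linarith
  have s2 : (1-β) * a ≤ V*e := by linarith
  have s3 : (1-β)*(δ/2*V - M*(Z+δ) - V*e) ≤ β*(V*e) := by
    nlinarith [mul_le_mul_of_nonneg_left s2 hβ0.le,
      mul_le_mul_of_nonneg_left s1 (by linarith : (0:ℝ) ≤ 1-β)]
  have s4 : (1-β)*δ/2*V - V*e ≤ (1-β)*M*(Z+δ) := by nlinarith [s3]
  have s5 : (1-β)*δ/4*V ≤ (1-β)*M*(K+1+δ) := by
    have hve : V*e ≤ V*((1-β)*δ/4) := mul_le_mul_of_nonneg_left he1 hVpos.le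
    have hzz : M*(Z+δ) ≤ M*(K+1+δ) := by
      apply mul_le_mul_of_nonneg_left _ hM.le
      linarith
    nlinarith [mul_le_mul_of_nonneg_left hzz (by linarith : (0:ℝ) ≤ 1-β)]
  have hfin : (1-β)*δ/4*(4*M*(K+1+δ)/δ + 1) ≤ (1-β)*δ/4*V :=
    mul_le_mul_of_nonneg_left hV (by nlinarith)
  have heq2 : (1-β)*δ/4*(4*M*(K+1+δ)/δ) = (1-β)*M*(K+1+δ) := by
    field_simp
  nlinarith [hfin, s5, heq2, mul_pos (by linarith : (0:ℝ) < 1-β) hδ]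

theorem stmt16 (B : X → Set (Dual' X)) (hB : MonotoneOp B) (δ M : ℝ)
    (hδ : 0 < δ) (hM : 0 < M)
    (hloc : ∀ y ∈ Metric.ball (0 : X) δ, (B y).Nonempty ∧ ∀ y' ∈ B y, ‖y'‖ ≤ M)
    (z : X) (β : ℝ) (hβ : β ∈ Set.Ioo (0:ℝ) 1)
    (zn : ℕ → X) (vn : ℕ → Dual' X) (hgra : ∀ n, vn n ∈ B (zn n))
    (hzn : Tendsto zn atTop (nhds (β • z)))
    (hne : ∀ n, vn n ≠ 0)
    (hnorm : Tendsto (fun n => ‖vn n‖) atTop atTop) :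
    0 ≤ atTop.limsup (fun n => (vn n) (z - zn n)) := by
  obtain ⟨hβ0, hβ1⟩ := hβ
  by_contra hcon
  push_neg at hcon
  set f : ℕ → ℝ := fun n => (vn n) (z - zn n) with hf
  have hlim : atTop.limsup f = sInf {a : ℝ | ∀ᶠ n in atTop, f n ≤ a} := Filter.limsup_eq
  have hS : {a : ℝ | ∀ᶠ n in atTop, f n ≤ a}.Nonempty := by
    by_contra h
    rw [Set.not_nonempty_iff_eq_empty] at h
    rw [hlim, h, Real.sInf_empty] at hcon
    exact lt_irrefl 0 hcon
  obtain ⟨c, hcmem, hc0⟩ := exists_lt_of_csInf_lt hS (by rw [← hlim]; exact hcon)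
  -- Key operator-norm bound from monotonicity against the ball
  have key : ∀ n, δ/2 * ‖vn n‖ ≤ (vn n) (zn n) + M * (‖zn n‖ + δ) := by
    intro n
    set Cn := (vn n) (zn n) + M * (‖zn n‖ + δ) with hCn
    have hball : ∀ y : X, ‖y‖ ≤ δ/2 → (vn n) y ≤ Cn := by
      intro y hy
      have hyb : y ∈ Metric.ball (0:X) δ := by
        rw [Metric.mem_ball, dist_zero_right]; linarith
      obtain ⟨⟨y', hy'⟩, hbd⟩ := hloc y hyb
      have hy'M : ‖y'‖ ≤ M := hbd y' hy'
      have hmono := hB (zn n) y (vn n) y' (hgra n) hy'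
      simp only [ContinuousLinearMap.sub_apply, map_sub] at hmono
      have h1 : |y' (zn n)| ≤ M * ‖zn n‖ := by
        calc |y' (zn n)| = ‖y' (zn n)‖ := (Real.norm_eq_abs _).symm
        _ ≤ ‖y'‖ * ‖zn n‖ := y'.le_opNorm _
        _ ≤ M * ‖zn n‖ := by
            exact mul_le_mul_of_nonneg_right hy'M (norm_nonneg _)
      have h2 : |y' y| ≤ M * (δ/2) := by
        calc |y' y| = ‖y' y‖ := (Real.norm_eq_abs _).symm
        _ ≤ ‖y'‖ * ‖y‖ := y'.le_opNorm _
        _ ≤ M * (δ/2) := by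
            exact mul_le_mul hy'M hy (norm_nonneg _) hM.le
      have h1' := abs_le.mp h1
      have h2' := abs_le.mp h2
      have hMz : 0 ≤ M * ‖zn n‖ := mul_nonneg hM.le (norm_nonneg _)
      nlinarith [hmono, h1'.1, h1'.2, h2'.1, h2'.2, hδ, hM]
    have hC0 : 0 ≤ Cn := by
      have h0 := hball 0 (by rw [norm_zero]; positivity)
      simpa using h0
    have hop : ‖vn n‖ ≤ (2/δ) * Cn := by
      apply ContinuousLinearMap.opNorm_le_bound _ (by positivity)
      intro x
      rcases eq_or_ne x 0 with rfl | hx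
      · simp
      · have hxn : 0 < ‖x‖ := norm_pos_iff.mpr hx
        set s := δ/(2*‖x‖) with hs
        have hsp : 0 < s := by positivity
        have hu : ‖s • x‖ = δ/2 := by
          rw [norm_smul, Real.norm_eq_abs, abs_of_pos hsp, hs]
          field_simp
        have h1 := hball (s • x) hu.le
        have h2 := hball (-(s • x)) (by rw [norm_neg, hu])
        rw [map_smul, smul_eq_mul] at h1
        rw [map_neg, map_smul, smul_eq_mul] at h2
        have hA : s * |(vn n) x| ≤ Cn := by
          rcases abs_cases ((vn n) x) with ⟨he, _⟩ | ⟨he, _⟩ <;> rw [he] <;> nlinarith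
        have hEq : s * (2/δ * Cn * ‖x‖) = Cn := by
          rw [hs]; field_simp
        rw [Real.norm_eq_abs]
        have := hEq ▸ hA
        exact le_of_mul_le_mul_left this hsp
    calc δ/2 * ‖vn n‖ ≤ δ/2 * ((2/δ) * Cn) := by
          exact mul_le_mul_of_nonneg_left hop (by positivity)
    _ = Cn := by field_simp
  -- eventual facts
  have hεpos : 0 < min ((1-β)*δ/4) 1 := lt_min (by nlinarith) one_pos
  have E1 : ∀ᶠ n in atTop, ‖zn n - β • z‖ < min ((1-β)*δ/4) 1 := by
    obtain ⟨N, hN⟩ := Metric.tendsto_atTop.mp hzn _ hεpos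
    exact eventually_atTop.mpr ⟨N, fun n hn => by rw [← dist_eq_norm]; exact hN n hn⟩
  have E2 : ∀ᶠ n in atTop, 4*M*(‖β • z‖ + 1 + δ)/δ + 1 ≤ ‖vn n‖ :=
    hnorm.eventually_ge_atTop _
  obtain ⟨n, hn1, hn2, hn3⟩ := (E1.and (E2.and hcmem)).exists
  set a := (vn n) z with ha
  set b := (vn n) (zn n) with hb
  set V := ‖vn n‖ with hV
  set e := ‖zn n - β • z‖ with he
  have hk := key n
  have hab : a - b ≤ c := by
    have hfn : f n = a - b := by simp [hf, ha, hb, map_sub]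
    rw [← hfn]; exact hn3
  have h3' : b - β * a ≤ V * e := by
    have hle := (vn n).le_opNorm (zn n - β • z)
    have heq : (vn n) (zn n - β • z) = b - β * a := by
      simp [map_sub, map_smul, smul_eq_mul, ha, hb]
    calc b - β*a = (vn n) (zn n - β • z) := heq.symm
    _ ≤ |(vn n) (zn n - β • z)| := le_abs_self _
    _ ≤ V * e := by rw [← Real.norm_eq_abs]; exact hle
  have hZ : ‖zn n‖ ≤ ‖β • z‖ + e := by
    have := norm_sub_norm_le (zn n) (β • z); linarith
  have he1 : e ≤ (1-β)*δ/4 := le_trans hn1.le (min_le_left _ _)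
  have he2 : e ≤ 1 := le_trans hn1.le (min_le_right _ _)
  have he0 : 0 ≤ e := norm_nonneg _
  exact stmt16_aux δ M β c a b V e ‖zn n‖ ‖β • z‖ hδ hM hβ0 hβ1 hc0
    hk hab h3' hZ he1 he2 he0 (norm_nonneg _) hn2
end
end

section
/- Let X be a real Banach space and T : X ⇉ X* maximal monotone with (0,0) ∈ gra T. Then F_T(0,0) = 0, and the function t ↦ F_T(tz, tz*) is real-valued and continuous on [0,1] whenever F_T(λz,λz*) < ∞ for all λ ∈ [0,1]; consequently, if F_T(λz,λz*) ≥ λ²⟨z,z*⟩ for all λ ∈ (0,1), then F_T(z,z*) ≥ ⟨z,z*⟩. -/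
open Set Filter Pointwise

noncomputable section

variable {X : Type*}

/-! Along the ray `t ↦ (t • z, t • z')` the Fitzpatrick function is a supremum of affine functions
of `t`, hence convex and lower semicontinuous; `(0, 0) ∈ gra T` makes it nonnegative, and
monotonicity against `(0, 0)` gives `F_T(0, 0) = 0`. A real convex function on a compact interval
is upper semicontinuous there (it lies below its chord, which meets it at the endpoints, and it is
continuous inside), so where it is finite it is continuous. The last claim follows by letting
`λ → 1⁻` in `λ² ⟨z, z'⟩ ≤ F_T(λ z, λ z')`. -/

open scoped Topology

lemma upperSemicontinuousWithinAt_of_le_of_continuousWithinAt {α : Type*} [TopologicalSpace α]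
    {f g : α → ℝ} {s : Set α} {c : α} (hg : ContinuousWithinAt g s c) (hle : ∀ x ∈ s, f x ≤ g x)
    (heq : g c = f c) : UpperSemicontinuousWithinAt f s c := fun y hy => by
  have hgc : g c < y := heq ▸ hy
  filter_upwards [hg.upperSemicontinuousWithinAt y hgc, self_mem_nhdsWithin] with x hx hxs
  exact (hle x hxs).trans_lt hx

lemma ConvexOn.le_chord_Icc {f : ℝ → ℝ} {a b y : ℝ} (hf : ConvexOn ℝ (Icc a b) f)
    (hy : y ∈ Icc a b) : (b - a) * f y ≤ (b - y) * f a + (y - a) * f b := by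
  rcases hy.1.eq_or_lt with rfl | hay
  · simp
  rcases hy.2.eq_or_lt with rfl | hyb
  · simp
  exact hf.secant_mono_aux1 (left_mem_Icc.2 (hay.trans hyb).le)
    (right_mem_Icc.2 (hay.trans hyb).le) hay hyb

lemma ConvexOn.upperSemicontinuousOn_Icc {f : ℝ → ℝ} {a b : ℝ} (hf : ConvexOn ℝ (Icc a b) f) :
    UpperSemicontinuousOn f (Icc a b) := by
  intro c hc
  rcases (hc.1.trans hc.2).eq_or_lt with rfl | hab
  · rw [Icc_self] at hc ⊢
    rw [mem_singleton_iff.1 hc]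
    exact continuousWithinAt_singleton.upperSemicontinuousWithinAt
  have hchord : ∀ y ∈ Icc a b, f y ≤ ((b - y) * f a + (y - a) * f b) / (b - a) := fun y hy => by
    rw [le_div_iff₀' (sub_pos.2 hab)]
    exact hf.le_chord_Icc hy
  have hcont : Continuous fun y => ((b - y) * f a + (y - a) * f b) / (b - a) := by fun_prop
  by_cases hend : c = a ∨ c = b
  · refine upperSemicontinuousWithinAt_of_le_of_continuousWithinAt
      hcont.continuousWithinAt hchord ?_
    rcases hend with rfl | rfl <;> field_simp <;> ring
  rw [not_or] at hend
  have hIoo : interior (Icc a b) ∈ 𝓝 c := by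
    rw [interior_Icc]
    exact Ioo_mem_nhds (hc.1.lt_of_ne (Ne.symm hend.1)) (hc.2.lt_of_ne hend.2)
  exact ((hf.continuousOn_interior c (mem_of_mem_nhds hIoo)).continuousAt hIoo)
    |>.continuousWithinAt.upperSemicontinuousWithinAt

lemma ConvexOn.continuousOn_Icc_of_lowerSemicontinuousOn {f : ℝ → ℝ} {a b : ℝ}
    (hf : ConvexOn ℝ (Icc a b) f) (hlsc : LowerSemicontinuousOn f (Icc a b)) :
    ContinuousOn f (Icc a b) :=
  continuousOn_iff_lower_upperSemicontinuousOn.2 ⟨hlsc, hf.upperSemicontinuousOn_Icc⟩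

lemma convexOn_toReal_biSup {ι E : Type*} [AddCommGroup E] [Module ℝ E] {C : Set E} {s : Set ι}
    {φ : ι → E → ℝ} (hC : Convex ℝ C) (hφ : ∀ i ∈ s, ConvexOn ℝ C (φ i)) (hs : s.Nonempty)
    (hfin : ∀ x ∈ C, ⨆ i ∈ s, (φ i x : EReal) ≠ ⊤) :
    ConvexOn ℝ C fun x => (⨆ i ∈ s, (φ i x : EReal)).toReal := by
  obtain ⟨i₀, hi₀⟩ := hs
  have hbot : ∀ x, ⨆ i ∈ s, (φ i x : EReal) ≠ ⊥ := fun x =>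
    ne_bot_of_le_ne_bot (EReal.coe_ne_bot _) (le_biSup (fun i => (φ i x : EReal)) hi₀)
  have hle : ∀ x ∈ C, ∀ i ∈ s, φ i x ≤ (⨆ i ∈ s, (φ i x : EReal)).toReal := fun x hx i hi => by
    simpa using EReal.toReal_le_toReal (le_biSup (fun i => (φ i x : EReal)) hi)
      (EReal.coe_ne_bot _) (hfin x hx)
  refine ⟨hC, fun x hx y hy a b ha hb hab => ?_⟩
  have hsup : ⨆ i ∈ s, (φ i (a • x + b • y) : EReal) ≤
      ((a * (⨆ i ∈ s, (φ i x : EReal)).toReal + b * (⨆ i ∈ s, (φ i y : EReal)).toReal : ℝ) :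
        EReal) := by
    refine iSup₂_le fun i hi => EReal.coe_le_coe_iff.2 ?_
    calc φ i (a • x + b • y) ≤ a • φ i x + b • φ i y := (hφ i hi).2 hx hy ha hb hab
      _ ≤ _ := by
        simp only [smul_eq_mul]
        gcongr
        exacts [hle x hx i hi, hle y hy i hi]
  have := EReal.toReal_le_toReal hsup (hbot _) (EReal.coe_ne_top _)
  rwa [EReal.toReal_coe] at this

lemma LowerSemicontinuous.lowerSemicontinuousOn_toReal {α : Type*} [TopologicalSpace α]
    {g : α → EReal} {C : Set α} (hg : LowerSemicontinuous g) (htop : ∀ x ∈ C, g x ≠ ⊤)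
    (hbot : ∀ x ∈ C, g x ≠ ⊥) : LowerSemicontinuousOn (fun x => (g x).toReal) C := by
  intro x hx y hy
  have hy' : (y : EReal) < g x := by
    rwa [← EReal.coe_toReal (htop x hx) (hbot x hx), EReal.coe_lt_coe_iff]
  filter_upwards [(hg x y hy').filter_mono nhdsWithin_le_nhds, self_mem_nhdsWithin]
    with x' hx' hx'C
  rw [← EReal.coe_toReal (htop x' hx'C) (hbot x' hx'C)] at hx'
  exact EReal.coe_lt_coe_iff.1 hx'

lemma le_of_forall_sq_mul_le_of_continuousWithinAt {f : ℝ → ℝ} {c : ℝ}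
    (hf : ContinuousWithinAt f (Ioo 0 1) 1) (h : ∀ l ∈ Ioo (0 : ℝ) 1, l ^ 2 * c ≤ f l) :
    c ≤ f 1 := by
  have := ContinuousWithinAt.closure_le (f := fun l : ℝ => l ^ 2 * c)
    (by rw [closure_Ioo zero_ne_one]; exact right_mem_Icc.2 zero_le_one)
    (by fun_prop) hf h
  simpa using this

section Fitzpatrick

variable [NormedAddCommGroup X] [NormedSpace ℝ X] {T : X → Set (Dual' X)}

lemma zero_le_fitz (h0 : (0 : Dual' X) ∈ T 0) (p : X × Dual' X) : 0 ≤ fitz T p :=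
  le_iSup₂_of_le ((0 : X), (0 : Dual' X)) h0 (by simp)

lemma fitz_zero (hT : MonotoneOp T) (h0 : (0 : Dual' X) ∈ T 0) : fitz T (0, 0) = 0 := by
  refine le_antisymm (iSup₂_le fun q hq => ?_) (zero_le_fitz h0 _)
  have hmono := hT q.1 0 q.2 0 hq h0
  simp only [sub_zero] at hmono
  simp only [map_zero, zero_apply, zero_add, zero_sub]
  exact_mod_cast neg_nonpos.2 hmono

lemma fitz_smul_smul (z : X) (z' : Dual' X) (t : ℝ) :
    fitz T (t • z, t • z') =
      ⨆ q ∈ {q : X × Dual' X | q.2 ∈ T q.1}, ((t * (q.2 z + z' q.1) - q.2 q.1 : ℝ) : EReal) := by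
  refine iSup_congr fun q => iSup_congr fun _ => ?_
  simp only [map_smul, smul_apply, smul_eq_mul]
  congr 1
  ring

lemma continuousOn_toReal_fitz_smul_smul (h0 : (0 : Dual' X) ∈ T 0) {z : X} {z' : Dual' X}
    {a b : ℝ} (hfin : ∀ t ∈ Icc a b, fitz T (t • z, t • z') ≠ ⊤) :
    ContinuousOn (fun t : ℝ => (fitz T (t • z, t • z')).toReal) (Icc a b) := by
  have hbot : ∀ t : ℝ, fitz T (t • z, t • z') ≠ ⊥ := fun t =>
    ne_bot_of_le_ne_bot EReal.zero_ne_bot (zero_le_fitz h0 _)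
  have hlsc : LowerSemicontinuous fun t : ℝ => fitz T (t • z, t • z') := by
    simp_rw [fitz_smul_smul]
    exact lowerSemicontinuous_biSup fun q _ =>
      (continuous_coe_real_ereal.comp (by fun_prop)).lowerSemicontinuous
  have hconvex : ConvexOn ℝ (Icc a b) fun t : ℝ => (fitz T (t • z, t • z')).toReal := by
    simp_rw [fitz_smul_smul]
    refine convexOn_toReal_biSup (convex_Icc a b) (fun q _ => ?_) ⟨(0, 0), h0⟩
      (by simpa only [fitz_smul_smul] using hfin)
    refine ⟨convex_Icc a b, fun x _ y _ μ ν _ _ hμν => le_of_eq ?_⟩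
    simp only [smul_eq_mul]
    linear_combination q.2 q.1 * hμν
  exact hconvex.continuousOn_Icc_of_lowerSemicontinuousOn
    (hlsc.lowerSemicontinuousOn_toReal hfin fun t _ => hbot t)

end Fitzpatrick

variable [NormedAddCommGroup X] [NormedSpace ℝ X] [CompleteSpace X]

theorem stmt17 (T : X → Set (Dual' X)) (hT : MaxMonotone T)
    (h0 : (0 : Dual' X) ∈ T 0) (z : X) (z' : Dual' X) :
    fitz T (0, 0) = 0 ∧
    ((∀ l : ℝ, l ∈ Set.Icc (0:ℝ) 1 → fitz T (l • z, l • z') < ⊤) →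
      ContinuousOn (fun t : ℝ => (fitz T (t • z, t • z')).toReal) (Set.Icc (0:ℝ) 1) ∧
      ((∀ l : ℝ, l ∈ Set.Ioo (0:ℝ) 1 →
          ((l ^ 2 * z' z : ℝ) : EReal) ≤ fitz T (l • z, l • z')) →
        ((z' z : ℝ) : EReal) ≤ fitz T (z, z'))) := by
  refine ⟨fitz_zero hT.1 h0, fun hfin => ?_⟩
  have hcont := continuousOn_toReal_fitz_smul_smul h0 fun l hl => (hfin l hl).ne
  refine ⟨hcont, fun hquad => ?_⟩
  have hreal : ∀ l ∈ Icc (0 : ℝ) 1,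
      ((fitz T (l • z, l • z')).toReal : EReal) = fitz T (l • z, l • z') := fun l hl =>
    EReal.coe_toReal (hfin l hl).ne (ne_bot_of_le_ne_bot EReal.zero_ne_bot (zero_le_fitz h0 _))
  have hlimit : z' z ≤ (fitz T ((1 : ℝ) • z, (1 : ℝ) • z')).toReal :=
    le_of_forall_sq_mul_le_of_continuousWithinAt
      ((hcont 1 (right_mem_Icc.2 zero_le_one)).mono Ioo_subset_Icc_self) fun l hl => by
        rw [← EReal.coe_le_coe_iff, hreal l (Ioo_subset_Icc_self hl)]
        exact hquad l hl
  have := EReal.coe_le_coe_iff.2 hlimit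
  rwa [hreal 1 (right_mem_Icc.2 zero_le_one), one_smul, one_smul] at this
end
end
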